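/- arXiv:1711.03520 — 2 statements merged into one kernel-verified Lean document; each statement's English description precedes it below -/
import Mathlib

section
/- There is no continuous map q: S¹ → ℝ such that (q, φ∘p): S¹ → ℝ × ℝ is injective, where p: S¹ → S¹ is the double covering z ↦ z² and φ: S¹ → ℝ is a function with exactly two critical-value preimage pairs separated (concretely, φ(z) = Re z). -/
/-!
STATEMENT 3: There is no continuous map q : S¹ → ℝ such that (q, φ∘p) : S¹ → ℝ × ℝ is
injective, where p : S¹ → S¹ is the double covering p(z) = z² and φ(z) = Re z.
In other words, φ ∘ p is not a 1-prem.
-/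

open Metric

/-- The circle `S¹`, as the unit circle in `ℂ`. -/
abbrev Circle' : Type := sphere (0 : ℂ) 1

/-- Negation on the unit circle. -/
def circleNeg (z : Circle') : Circle' :=
  ⟨-(z : ℂ), by
    have := z.2
    simp only [mem_sphere_iff_norm, sub_zero] at this ⊢
    simpa using this⟩

lemma circleNeg_continuous : Continuous circleNeg := by
  apply Continuous.subtype_mk
  exact continuous_subtype_val.neg

lemma circleNeg_neg (z : Circle') : circleNeg (circleNeg z) = z := by
  simp [circleNeg]

instance : ConnectedSpace Circle' := by
  have h : (1 : Cardinal) < Module.rank ℝ ℂ := by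
    rw [Complex.rank_real_complex]
    norm_num
  exact Subtype.connectedSpace (isConnected_sphere h 0 (by norm_num : (0:ℝ) ≤ 1))

/-- There is no continuous `q : S¹ → ℝ` making `z ↦ (q z, Re (z²))` injective. -/
theorem no_vertical_lift_of_double_cover_composed_with_Morse_function :
    ¬ ∃ q : C(Circle', ℝ),
        Function.Injective (fun z : Circle' => (q z, ((z : ℂ) ^ 2).re)) := by
  rintro ⟨q, hq⟩
  set g : Circle' → ℝ := fun z => q z - q (circleNeg z) with hg
  have hgc : Continuous g := q.continuous.sub (q.continuous.comp circleNeg_continuous)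
  have hodd : ∀ z, g (circleNeg z) = -g z := by
    intro z; simp [hg, circleNeg_neg]
  -- g is never zero
  have hne : ∀ z, g z ≠ 0 := by
    intro z h0
    have hqz : q z = q (circleNeg z) := by
      have := sub_eq_zero.mp h0; exact this
    have hre : ((circleNeg z : ℂ)) ^ 2 = (z : ℂ) ^ 2 := by
      simp [circleNeg]
    have : z = circleNeg z := hq (by
      simp only [Prod.mk.injEq]
      constructor
      · exact hqz
      · rw [hre])
    have hz : (z : ℂ) = -(z : ℂ) := congrArg Subtype.val this
    have : (z : ℂ) = 0 := by linear_combination hz / 2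
    have hn := z.2
    simp [this] at hn
  -- but g takes both signs, contradiction by IVT
  set z₀ : Circle' := ⟨1, by simp⟩
  have h0 : (0 : ℝ) ∈ Set.Icc (min (g z₀) (g (circleNeg z₀))) (max (g z₀) (g (circleNeg z₀))) := by
    have := hodd z₀
    rcases le_total (g z₀) 0 with h | h
    · constructor
      · exact min_le_of_left_le h
      · apply le_max_of_le_right; rw [this]; linarith
    · constructor
      · apply min_le_of_right_le; rw [this]; linarith
      · exact le_max_of_le_left h
  rcases le_total (g z₀) (g (circleNeg z₀)) with h | h
  · rw [min_eq_left h, max_eq_right h] at h0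
    obtain ⟨z, hz⟩ := intermediate_value_univ z₀ (circleNeg z₀) hgc h0
    exact hne z hz
  · rw [min_eq_right h, max_eq_left h] at h0
    obtain ⟨z, hz⟩ := intermediate_value_univ (circleNeg z₀) z₀ hgc h0
    exact hne z hz
end

section
/- The Whitney sum of four copies of the tautological line bundle γ over ℝP³ is stably trivial: 4γ ⊕ εᵐ ≅ ε^(4+m) for some m ≥ 0 (in fact 4γ is trivial over ℝP³). -/
/-!
STATEMENT 12: The Whitney sum 4γ of four copies of the tautological line bundle γ over
ℝP³ is stably trivial: 4γ ⊕ εᵐ ≅ ε^(4+m) for some m ≥ 0.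

Mathlib has no tautological bundle over ℝP³, so we use the standard equivariant
dictionary.  A vector bundle over ℝP³ is determined by its pullback to S³ together
with the ℤ/2-action: 4γ pulls back to the trivial bundle S³ × ℝ⁴ on which the
antipodal map acts by -1 on fibers, and εᵐ pulls back to S³ × ℝᵐ with trivial action
on fibers.  Hence a trivialization of 4γ ⊕ εᵐ over ℝP³ is exactly a continuous family
of bases (F₁(x), …, F₄(x), G₁(x), …, G_m(x)) of ℝ^(4+m), parametrized by x ∈ S³, with
each Fᵢ odd (Fᵢ(-x) = -Fᵢ(x)) and each Gⱼ even (Gⱼ(-x) = Gⱼ(x)).  Since 4+m vectors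
in ℝ^(4+m) are a basis iff they are linearly independent, the statement reads:
-/

open Metric

/-- The 3-sphere, the double cover of ℝP³. -/
abbrev ThreeSphere : Type := sphere (0 : EuclideanSpace ℝ (Fin 4)) 1

open scoped Quaternion

/-- Linear identification of the quaternions with `ℝ⁴`. -/
noncomputable def quatEquiv : ℍ[ℝ] ≃ₗ[ℝ] EuclideanSpace ℝ (Fin 4) :=
  (QuaternionAlgebra.linearEquivTuple (-1 : ℝ) 0 (-1)).trans
    (WithLp.linearEquiv 2 ℝ (Fin 4 → ℝ)).symm

/-- The odd frame: left quaternion multiplication by `x` applied to the standard basis. -/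
noncomputable def quatFrame (x : ThreeSphere) (i : Fin 4) : EuclideanSpace ℝ (Fin 4) :=
  quatEquiv (quatEquiv.symm (x : EuclideanSpace ℝ (Fin 4)) *
    quatEquiv.symm (EuclideanSpace.single i 1))

theorem quatFrame_continuous : Continuous fun x : ThreeSphere => quatFrame x := by
  unfold quatFrame
  have hφ : Continuous quatEquiv := quatEquiv.toLinearMap.continuous_of_finiteDimensional
  have hφs : Continuous quatEquiv.symm :=
    quatEquiv.symm.toLinearMap.continuous_of_finiteDimensional
  fun_prop

theorem quatFrame_odd (x : ThreeSphere) (i : Fin 4) : quatFrame (-x) i = -(quatFrame x i) := by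
  have h : ((-x : ThreeSphere) : EuclideanSpace ℝ (Fin 4)) = -(x : EuclideanSpace ℝ (Fin 4)) :=
    rfl
  simp [quatFrame, h]

theorem quatFrame_li (x : ThreeSphere) : LinearIndependent ℝ (quatFrame x) := by
  have hx : (x : EuclideanSpace ℝ (Fin 4)) ≠ 0 := by
    have := mem_sphere_zero_iff_norm.mp x.2
    intro h; rw [h] at this; simp at this
  have hq : quatEquiv.symm (x : EuclideanSpace ℝ (Fin 4)) ≠ 0 := by simpa using hx
  have h1 : LinearIndependent ℝ (fun i : Fin 4 => (EuclideanSpace.single i (1:ℝ))) := by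
    have := (EuclideanSpace.basisFun (Fin 4) ℝ).toBasis.linearIndependent
    convert this using 1
    funext i
    simp [EuclideanSpace.basisFun]
    rfl
    all_goals rfl
  have h2 : LinearIndependent ℝ (fun i : Fin 4 =>
      quatEquiv.symm (EuclideanSpace.single i (1:ℝ))) :=
    h1.map' quatEquiv.symm.toLinearMap quatEquiv.symm.ker
  have h3 : LinearIndependent ℝ (fun i : Fin 4 =>
      quatEquiv.symm (x : EuclideanSpace ℝ (Fin 4)) *
        quatEquiv.symm (EuclideanSpace.single i (1:ℝ))) := by
    have := h2.map'
      (LinearMap.mulLeft ℝ (quatEquiv.symm (x : EuclideanSpace ℝ (Fin 4)))) ?_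
    · exact this
    · rw [LinearMap.ker_eq_bot]
      intro a b hab
      simpa [LinearMap.mulLeft_apply] using mul_left_cancel₀ hq hab
  exact h3.map' quatEquiv.toLinearMap quatEquiv.ker

/-- `4γ` is stably trivial over `ℝP³`: for some `m`, `4γ ⊕ εᵐ ≅ ε^(4+m)`. -/
theorem four_gamma_stably_trivial_over_RP3 :
    ∃ (m : ℕ)
      (F : ThreeSphere → Fin 4 → EuclideanSpace ℝ (Fin (4 + m)))
      (G : ThreeSphere → Fin m → EuclideanSpace ℝ (Fin (4 + m))),
      Continuous F ∧ Continuous G ∧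
      (∀ (x : ThreeSphere) (i : Fin 4), F (-x) i = -(F x i)) ∧
      (∀ (x : ThreeSphere) (j : Fin m), G (-x) j = G x j) ∧
      ∀ x : ThreeSphere, LinearIndependent ℝ (Sum.elim (F x) (G x)) := by
  refine ⟨0, quatFrame, fun _ => Fin.elim0, quatFrame_continuous, continuous_const,
    quatFrame_odd, fun x j => j.elim0, fun x => ?_⟩
  have h := quatFrame_li x
  rw [linearIndependent_sum]
  exact ⟨h, linearIndependent_empty_type, by simp⟩
end
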